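/- Let b ≥ a+2 and let (a_{h,n}, e_{i,n}) be an A-module structure on the I×{a,…,b}-graded space with all graded pieces equal, V_{i,n} = V_i, such that every e_{i,n} is invertible. Then there exists a unique pair ((g_{i,n}), B), where each g_{i,n} : V_i → V_i is invertible with g_{i,a} = id and B ∈ ⊕_{h∈H} Hom(V_{s(h)}, V_{t(h)}), such that a_{h,n} = g_{t(h),n+1}∘B_h∘g_{s(h),n}⁻¹ for all h ∈ H and a ≤ n ≤ b−1, and e_{i,n} = g_{i,n+1}∘g_{i,n}⁻¹ for all i ∈ I and a ≤ n ≤ b−1. Moreover B satisfies the preprojective relation: Σ_{h∈H, s(h)=k} ε(h) B_{h̄}∘B_h = 0 for every k ∈ I. -/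

import Mathlib

noncomputable section

/-- Cast of components of a family of `ℂ`-vector spaces along an equality of indices. -/
def lcast {I : Type} (V : I → Type) [∀ i, AddCommGroup (V i)] [∀ i, Module ℂ (V i)]
    {i j : I} (hij : i = j) : V i ≃ₗ[ℂ] V j := by
  subst hij; exact LinearEquiv.refl ℂ (V i)

/-!
Put `g_{i,n} = e_{i,n-1} ∘ ⋯ ∘ e_{i,a}`: it is the only family with `g_{i,a} = id` and
`e_{i,n} = g_{i,n+1} ∘ g_{i,n}⁻¹`, and set `B_h = g_{t h,a+1}⁻¹ ∘ a_{h,a}`. Since (R2) reads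
`a_{h,n+1} = e_{t h,n+1} ∘ a_{h,n} ∘ e_{s h,n}⁻¹`, induction on `n` gives
`a_{h,n} = g_{t h,n+1} ∘ B_h ∘ g_{s h,n}⁻¹`. Substituted into (R1) at `n = a`, this turns the
preprojective sum of `a` into the preprojective sum of `B` conjugated by `g_{k,a+2}` and
`g_{k,a}`, which therefore vanishes. Uniqueness: `g` is determined by the `e`'s and then `B` by
`a_{h,a}`.
-/

open Finset

section Gauge

variable {R M N : Type*} [Semiring R] [AddCommMonoid M] [Module R M]
  [AddCommMonoid N] [Module R N]

def chainProd (e : ℤ → M ≃ₗ[R] M) (a : ℤ) : ℕ → M ≃ₗ[R] M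
  | 0 => LinearEquiv.refl R M
  | k + 1 => (chainProd e a k).trans (e (a + k))

theorem exists_gauge (e : ℤ → M →ₗ[R] M) (a c : ℤ)
    (he : ∀ n ∈ Icc a c, Function.Bijective (e n)) :
    ∃ g : ℤ → M ≃ₗ[R] M, g a = LinearEquiv.refl R M ∧
      ∀ n ∈ Icc a c, e n = (g (n + 1)).toLinearMap ∘ₗ (g n).symm.toLinearMap := by
  let E : ℤ → M ≃ₗ[R] M := fun n =>
    if hn : n ∈ Icc a c then LinearEquiv.ofBijective (e n) (he n hn) else LinearEquiv.refl R M
  refine ⟨fun n => chainProd E a (n - a).toNat, by simp [chainProd], fun n hn => ?_⟩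
  have hsucc : (n + 1 - a).toNat = (n - a).toNat + 1 := by grind
  have hn' : a + ((n - a).toNat : ℤ) = n := by grind
  beta_reduce
  rw [LinearEquiv.eq_comp_toLinearMap_symm, hsucc, chainProd, hn']
  ext x
  simp only [LinearMap.comp_apply, LinearEquiv.coe_coe, LinearEquiv.trans_apply, E, dif_pos hn,
    LinearEquiv.ofBijective_apply]

theorem gauge_unique (e : ℤ → M →ₗ[R] M) (g g' : ℤ → M ≃ₗ[R] M) (a c : ℤ) (ha : g' a = g a)
    (hg : ∀ n ∈ Icc a (c - 1), e n = (g (n + 1)).toLinearMap ∘ₗ (g n).symm.toLinearMap)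
    (hg' : ∀ n ∈ Icc a (c - 1), e n = (g' (n + 1)).toLinearMap ∘ₗ (g' n).symm.toLinearMap) :
    ∀ n ∈ Icc a c, g' n = g n := by
  intro n hn
  obtain ⟨han, hnc⟩ := mem_Icc.mp hn
  clear hn
  induction n, han using Int.leInduction with
  | base => exact ha
  | succ n han ih =>
    have hn : n ∈ Icc a (c - 1) := mem_Icc.mpr ⟨han, by omega⟩
    rw [← LinearEquiv.toLinearMap_inj,
      ← (LinearEquiv.eq_comp_toLinearMap_symm _ _).mp (hg n hn),
      ← (LinearEquiv.eq_comp_toLinearMap_symm _ _).mp (hg' n hn), ih (by omega)]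

theorem eq_conj_of_comm (gM : ℤ → M ≃ₗ[R] M) (gN : ℤ → N ≃ₗ[R] N) (eM : ℤ → M →ₗ[R] M)
    (eN : ℤ → N →ₗ[R] N) (f : ℤ → M →ₗ[R] N) (B : M →ₗ[R] N) (a c : ℤ)
    (hM : ∀ n ∈ Icc a c, eM n = (gM (n + 1)).toLinearMap ∘ₗ (gM n).symm.toLinearMap)
    (hN : ∀ n ∈ Icc a c, eN n = (gN (n + 1)).toLinearMap ∘ₗ (gN n).symm.toLinearMap)
    (hcomm : ∀ n ∈ Icc a (c - 1), eN (n + 1) ∘ₗ f n = f (n + 1) ∘ₗ eM n)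
    (ha : f a = (gN (a + 1)).toLinearMap ∘ₗ B ∘ₗ (gM a).symm.toLinearMap) :
    ∀ n ∈ Icc a c,
      f n = (gN (n + 1)).toLinearMap ∘ₗ B ∘ₗ (gM n).symm.toLinearMap := by
  intro n hn
  obtain ⟨han, hnc⟩ := mem_Icc.mp hn
  clear hn
  induction n, han using Int.leInduction with
  | base => exact ha
  | succ n han ih =>
    have hn : n ∈ Icc a (c - 1) := mem_Icc.mpr ⟨han, by omega⟩
    ext x
    have key := LinearMap.congr_fun (hcomm n hn) ((gM n) ((gM (n + 1)).symm x))
    simp only [hM n (mem_Icc.mpr ⟨han, by omega⟩), hN (n + 1) (mem_Icc.mpr ⟨by omega, hnc⟩),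
      ih (by omega), LinearMap.comp_apply, LinearEquiv.coe_coe, LinearEquiv.symm_apply_apply,
      LinearEquiv.apply_symm_apply] at key
    simpa only [LinearMap.comp_apply, LinearEquiv.coe_coe] using key.symm

end Gauge

section Preprojective

variable {I H : Type} {V : I → Type} [∀ i, AddCommGroup (V i)] [∀ i, Module ℂ (V i)]

theorem lcast_comp_conj (g₀ g₁ g₂ : ∀ i, V i ≃ₗ[ℂ] V i) {i j i' j' k : I}
    (e₁ : j' = k) (e₂ : i' = j) (e₃ : i = k) (X : V i' →ₗ[ℂ] V j') (Y : V i →ₗ[ℂ] V j) :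
    (lcast V e₁).toLinearMap ∘ₗ ((g₂ j').toLinearMap ∘ₗ X ∘ₗ (g₁ i').symm.toLinearMap)
      ∘ₗ (lcast V e₂).symm.toLinearMap ∘ₗ ((g₁ j).toLinearMap ∘ₗ Y ∘ₗ (g₀ i).symm.toLinearMap)
      ∘ₗ (lcast V e₃).symm.toLinearMap =
    (g₂ k).toLinearMap ∘ₗ ((lcast V e₁).toLinearMap ∘ₗ X ∘ₗ (lcast V e₂).symm.toLinearMap ∘ₗ Y
      ∘ₗ (lcast V e₃).symm.toLinearMap) ∘ₗ (g₀ k).symm.toLinearMap := by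
  subst e₁ e₂ e₃
  ext x
  simp [lcast]

variable [DecidableEq I] [Fintype H] {s t : H → I} {bar : H → H}
  (s_bar : ∀ h, s (bar h) = t h) (t_bar : ∀ h, t (bar h) = s h) (eps : H → ℤ)

def preprojectiveSum (X Y : ∀ h, V (s h) →ₗ[ℂ] V (t h)) (k : I) : V k →ₗ[ℂ] V k :=
  ∑ h : H, if hk : s h = k then
    (eps h : ℂ) • ((lcast V ((t_bar h).trans hk)).toLinearMap ∘ₗ X (bar h)
      ∘ₗ (lcast V (s_bar h)).symm.toLinearMap ∘ₗ Y h ∘ₗ (lcast V hk).symm.toLinearMap) else 0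

theorem preprojectiveSum_conj (g₀ g₁ g₂ : ∀ i, V i ≃ₗ[ℂ] V i) (X Y : ∀ h, V (s h) →ₗ[ℂ] V (t h))
    (k : I) :
    preprojectiveSum s_bar t_bar eps
      (fun h => (g₂ (t h)).toLinearMap ∘ₗ X h ∘ₗ (g₁ (s h)).symm.toLinearMap)
      (fun h => (g₁ (t h)).toLinearMap ∘ₗ Y h ∘ₗ (g₀ (s h)).symm.toLinearMap) k =
    (g₂ k).toLinearMap ∘ₗ preprojectiveSum s_bar t_bar eps X Y k ∘ₗ (g₀ k).symm.toLinearMap := by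
  ext x
  simp only [preprojectiveSum, LinearMap.comp_apply, LinearMap.sum_apply, map_sum]
  refine Finset.sum_congr rfl fun h _ => ?_
  split_ifs with hk
  · rw [LinearMap.smul_apply, lcast_comp_conj g₀ g₁ g₂]
    simp
  · simp

end Preprojective

theorem stmt9
    {I H : Type} [Fintype H] [DecidableEq I]
    (s t : H → I) (bar : H → H)
    (s_bar : ∀ h, s (bar h) = t h) (t_bar : ∀ h, t (bar h) = s h)
    (eps : H → ℤ)
    (a b : ℤ) (hab : a + 2 ≤ b)
    (V : I → Type)
    [∀ i, AddCommGroup (V i)] [∀ i, Module ℂ (V i)]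
    -- an A-module structure on the graded space with V_{i,n} = V_i:
    (aM : ∀ (h : H), ℤ → (V (s h) →ₗ[ℂ] V (t h)))
    (eM : ∀ (i : I), ℤ → (V i →ₗ[ℂ] V i))
    -- (R1) the preprojective relations
    (hR1 : ∀ k : I, ∀ n ∈ Finset.Icc a (b - 2),
      (∑ h : H, if hk : s h = k then
        (eps h : ℂ) • ((lcast V ((t_bar h).trans hk)).toLinearMap ∘ₗ aM (bar h) (n + 1)
          ∘ₗ (lcast V (s_bar h)).symm.toLinearMap ∘ₗ aM h n
          ∘ₗ (lcast V hk).symm.toLinearMap) else 0) = 0)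
    -- (R2) the commutation relations
    (hR2 : ∀ h : H, ∀ n ∈ Finset.Icc a (b - 2),
      eM (t h) (n + 1) ∘ₗ aM h n = aM h (n + 1) ∘ₗ eM (s h) n)
    -- every e_{i,n} is invertible
    (hinv : ∀ i : I, ∀ n ∈ Finset.Icc a (b - 1), Function.Bijective (eM i n)) :
    ∃ (g : ∀ i : I, ℤ → (V i ≃ₗ[ℂ] V i)) (B : ∀ h, V (s h) →ₗ[ℂ] V (t h)),
      (∀ i, g i a = LinearEquiv.refl ℂ (V i)) ∧
      (∀ h : H, ∀ n ∈ Finset.Icc a (b - 1),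
        aM h n = (g (t h) (n + 1)).toLinearMap ∘ₗ B h ∘ₗ ((g (s h) n).symm.toLinearMap)) ∧
      (∀ i : I, ∀ n ∈ Finset.Icc a (b - 1),
        eM i n = (g i (n + 1)).toLinearMap ∘ₗ ((g i n).symm.toLinearMap)) ∧
      -- B satisfies the preprojective relation
      (∀ k : I, (∑ h : H, if hk : s h = k then
        (eps h : ℂ) • ((lcast V ((t_bar h).trans hk)).toLinearMap ∘ₗ B (bar h)
          ∘ₗ (lcast V (s_bar h)).symm.toLinearMap ∘ₗ B h
          ∘ₗ (lcast V hk).symm.toLinearMap) else 0) = 0) ∧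
      -- uniqueness of the pair ((g), B)
      (∀ (g' : ∀ i : I, ℤ → (V i ≃ₗ[ℂ] V i)) (B' : ∀ h, V (s h) →ₗ[ℂ] V (t h)),
        (∀ i, g' i a = LinearEquiv.refl ℂ (V i)) →
        (∀ h : H, ∀ n ∈ Finset.Icc a (b - 1),
          aM h n = (g' (t h) (n + 1)).toLinearMap ∘ₗ B' h ∘ₗ ((g' (s h) n).symm.toLinearMap)) →
        (∀ i : I, ∀ n ∈ Finset.Icc a (b - 1),
          eM i n = (g' i (n + 1)).toLinearMap ∘ₗ ((g' i n).symm.toLinearMap)) →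
        (∀ i, ∀ n ∈ Finset.Icc a b, g' i n = g i n) ∧ B' = B) := by
  choose g hg_a hg_e using fun i => exists_gauge (eM i) a (b - 1) (hinv i)
  set B : ∀ h, V (s h) →ₗ[ℂ] V (t h) := fun h => (g (t h) (a + 1)).symm.toLinearMap ∘ₗ aM h a
  have ha : a ∈ Icc a (b - 1) := mem_Icc.mpr ⟨le_rfl, by omega⟩
  have hB : ∀ h, aM h a = (g (t h) (a + 1)).toLinearMap ∘ₗ B h ∘ₗ (g (s h) a).symm.toLinearMap :=
    fun h => by ext x; simp [B, hg_a]
  have hconj : ∀ h, ∀ n ∈ Icc a (b - 1),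
      aM h n = (g (t h) (n + 1)).toLinearMap ∘ₗ B h ∘ₗ (g (s h) n).symm.toLinearMap :=
    fun h => eq_conj_of_comm _ _ _ _ _ _ a (b - 1) (hg_e (s h)) (hg_e (t h))
      (fun n hn => hR2 h n (by simp only [mem_Icc] at hn ⊢; omega)) (hB h)
  refine ⟨g, B, hg_a, hconj, hg_e, fun k => ?_, fun g' B' hg'_a hconj' hg'_e => ?_⟩
  · have hR1a : preprojectiveSum s_bar t_bar eps (fun h => aM h (a + 1)) (fun h => aM h a) k = 0 :=
      hR1 k a (mem_Icc.mpr ⟨le_rfl, by omega⟩)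
    have hB_conj := preprojectiveSum_conj s_bar t_bar eps (fun i => g i a) (fun i => g i (a + 1))
      (fun i => g i (a + 1 + 1)) B B k
    beta_reduce at hB_conj
    rw [funext fun h => hconj h (a + 1) (mem_Icc.mpr ⟨by omega, by omega⟩),
      funext fun h => hconj h a ha, hB_conj] at hR1a
    show preprojectiveSum s_bar t_bar eps B B k = 0
    ext x
    simpa [hg_a] using LinearMap.congr_fun hR1a x
  · have hg' : ∀ i, ∀ n ∈ Icc a b, g' i n = g i n := fun i =>
      gauge_unique (eM i) (g i) (g' i) a b ((hg'_a i).trans (hg_a i).symm) (hg_e i) (hg'_e i)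
    refine ⟨hg', funext fun h => ?_⟩
    have hB' := hconj' h a ha
    rw [hg'_a, hg' (t h) (a + 1) (mem_Icc.mpr ⟨by omega, by omega⟩)] at hB'
    ext x
    simp [B, hB']
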